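/- Upper bound on membership advantage under DP: if A is (ε, δ)-DP, then for any neighboring datasets and any test with Type I error α and Type II error β, the membership advantage satisfies 1 − β − α ≤ (e^ε − 1 + 2δ)/(e^ε + 1). -/
import Mathlib


open MeasureTheory

/-- Membership-advantage bound under `(ε, δ)`-DP: with Type I error
`α = ℙ[A(D) ∈ S]` and Type II error `β = 1 - ℙ[A(D') ∈ S]`, the advantage
satisfies `1 - β - α ≤ (e^ε - 1 + 2δ) / (e^ε + 1)`. The DP inequality is
assumed in both orderings of the neighboring pair `D, D'` (with laws `μ, ν`). -/
theorem dp_membership_advantage {S : Type*} [MeasurableSpace S]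
    (μ ν : Measure S) [IsProbabilityMeasure μ] [IsProbabilityMeasure ν]
    (ε δ : ℝ)
    (h₁ : ∀ s : Set S, MeasurableSet s →
      (μ s).toReal ≤ Real.exp ε * (ν s).toReal + δ)
    (h₂ : ∀ s : Set S, MeasurableSet s →
      (ν s).toReal ≤ Real.exp ε * (μ s).toReal + δ)
    (s : Set S) (hs : MeasurableSet s) (α β : ℝ)
    (hα : α = (μ s).toReal) (hβ : β = 1 - (ν s).toReal) :
    1 - β - α ≤ (Real.exp ε - 1 + 2 * δ) / (Real.exp ε + 1) := by
  have hμc : (μ sᶜ).toReal = 1 - (μ s).toReal := by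
    rw [prob_compl_eq_one_sub hs, ENNReal.toReal_sub_of_le prob_le_one (by simp)]
    simp
  have hνc : (ν sᶜ).toReal = 1 - (ν s).toReal := by
    rw [prob_compl_eq_one_sub hs, ENNReal.toReal_sub_of_le prob_le_one (by simp)]
    simp
  have hA := h₂ s hs
  have hB := h₁ sᶜ hs.compl
  rw [hμc, hνc] at hB
  have hpos : 0 < Real.exp ε + 1 := by positivity
  rw [le_div_iff₀ hpos]
  subst hα hβ
  nlinarith [Real.exp_pos ε]
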